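/- arXiv:2507.13501 — 4 statements merged into one kernel-verified Lean document; each statement's English description precedes it below -/
import Mathlib

section
/- For S = Ry2 the second Rényi entropy and β > 0, the function F(λ) = λx + (1-λ)y + β⁻¹ log(λ² + (1-λ)²) on [0,1] attains its minimum at an interior point λ_min ∈ (0,1) whenever |y - x| < 2/β, and this minimizer equals λ_min = (1 + u - √(1 - u²))/(2u) where u = β(y - x)/2 (for u ≠ 0; λ_min = 1/2 if u = 0). -/
/-!
Write `q l = l² + (1 - l)²` and `u = β (y - x) / 2`. Then
`F' l = (2 / β) ((2l - 1) / q l - u)`, so the critical points are the roots of the quadratic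
`u q l = 2l - 1`, and `λ_min` is its root in `(0, 1)`. Subtracting the equation at `λ_min` factors
`F' l` as `(l - λ_min)` times `4 (1 + u - u (l + λ_min)) / (β q l)`, which is positive on `[0, 1]`
because `|u| < 1`: `F` decreases up to `λ_min` and increases after it.
-/

open Real Set

noncomputable def ry2Minimizer (u : ℝ) : ℝ :=
  if u = 0 then 1/2 else (1 + u - Real.sqrt (1 - u^2)) / (2 * u)

section Minimizer

variable {u : ℝ}

/-- Rationalising the numerator removes the case split at `u = 0`. -/
lemma ry2Minimizer_eq_div (hu : |u| < 1) :
    ry2Minimizer u = (1 + u) / (1 + u + √(1 - u ^ 2)) := by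
  obtain ⟨hu₁, hu₂⟩ := abs_lt.mp hu
  have hr : √(1 - u ^ 2) ^ 2 = 1 - u ^ 2 := sq_sqrt (by nlinarith)
  have hden : 0 < 1 + u + √(1 - u ^ 2) := by linarith [sqrt_nonneg (1 - u ^ 2)]
  unfold ry2Minimizer
  split_ifs with hu₀
  · subst hu₀; norm_num
  · rw [div_eq_div_iff (mul_ne_zero two_ne_zero hu₀) hden.ne']
    linear_combination -hr

lemma ry2Minimizer_mem_Ioo (hu : |u| < 1) : ry2Minimizer u ∈ Ioo 0 1 := by
  obtain ⟨hu₁, hu₂⟩ := abs_lt.mp hu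
  have hr : 0 < √(1 - u ^ 2) := sqrt_pos.mpr (by nlinarith)
  rw [ry2Minimizer_eq_div hu]
  exact ⟨div_pos (by linarith) (by linarith), (div_lt_one (by linarith)).mpr (by linarith)⟩

lemma ry2Minimizer_critical (hu : |u| < 1) :
    u * (ry2Minimizer u ^ 2 + (1 - ry2Minimizer u) ^ 2) = 2 * ry2Minimizer u - 1 := by
  obtain ⟨hu₁, hu₂⟩ := abs_lt.mp hu
  have hr : √(1 - u ^ 2) ^ 2 = 1 - u ^ 2 := sq_sqrt (by nlinarith)
  have hden : 0 < 1 + u + √(1 - u ^ 2) := by linarith [sqrt_nonneg (1 - u ^ 2)]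
  rw [ry2Minimizer_eq_div hu]
  field_simp
  linear_combination (1 + u) * hr

end Minimizer

lemma sq_add_one_sub_sq_pos (l : ℝ) : 0 < l ^ 2 + (1 - l) ^ 2 := by
  nlinarith [sq_nonneg (2 * l - 1)]

lemma hasDerivAt_log_sq_add_one_sub_sq (l : ℝ) :
    HasDerivAt (fun l => log (l ^ 2 + (1 - l) ^ 2)) ((4 * l - 2) / (l ^ 2 + (1 - l) ^ 2)) l := by
  have hq := (hasDerivAt_pow 2 l).fun_add (((hasDerivAt_id' l).const_sub 1).fun_pow 2)
  exact (hq.log (sq_add_one_sub_sq_pos l).ne').congr_deriv (by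
    simp only [Nat.cast_ofNat, Nat.add_one_sub_one, pow_one, mul_neg, mul_one]; ring)

lemma one_add_sub_mul_add_pos {u l c : ℝ} (hu : |u| < 1) (hl : l ∈ Icc 0 1) (hc : c ∈ Icc 0 1) :
    0 < 1 + u - u * (l + c) := by
  obtain ⟨hu₁, hu₂⟩ := abs_lt.mp hu
  rcases le_total 0 u with h | h
  · nlinarith [hl.2, hc.2]
  · nlinarith [hl.1, hc.1]

/-- Subtracting the critical-point equation at `c` factors out `l - c`. -/
lemma hasDerivAt_ry2Objective {β x y u c : ℝ} (hβ : β ≠ 0) (hu : β * (y - x) / 2 = u)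
    (hc : u * (c ^ 2 + (1 - c) ^ 2) = 2 * c - 1) (l : ℝ) :
    HasDerivAt (fun l => l * x + (1 - l) * y + β⁻¹ * log (l ^ 2 + (1 - l) ^ 2))
      ((l - c) * (4 * (1 + u - u * (l + c)) / (β * (l ^ 2 + (1 - l) ^ 2)))) l := by
  have hq := (sq_add_one_sub_sq_pos l).ne'
  have hxy : x - y = -(2 * u / β) := by rw [← hu]; field_simp; ring
  have hlin := ((hasDerivAt_id' l).mul_const x).fun_add
    (((hasDerivAt_id' l).const_sub 1).mul_const y)
  refine (hlin.fun_add ((hasDerivAt_log_sq_add_one_sub_sq l).const_mul β⁻¹)).congr_deriv ?_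
  rw [one_mul, neg_one_mul, ← sub_eq_add_neg, hxy]
  field_simp
  linear_combination -2 * hc

theorem ry2_interior_minimizer (β : ℝ) (hβ : 0 < β) (x y : ℝ)
    (h : |y - x| < 2 / β) :
    let F : ℝ → ℝ := fun l => l * x + (1 - l) * y + β⁻¹ * Real.log (l^2 + (1-l)^2)
    let u : ℝ := β * (y - x) / 2
    let lmin : ℝ := if u = 0 then 1/2 else (1 + u - Real.sqrt (1 - u^2)) / (2 * u)
    lmin ∈ Set.Ioo (0:ℝ) 1 ∧ ∀ μ ∈ Set.Icc (0:ℝ) 1, F lmin ≤ F μ := by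
  intro F u lmin
  have hu : |u| < 1 := by
    rw [abs_div, abs_mul, abs_of_pos hβ, abs_two, div_lt_one two_pos]
    rwa [lt_div_iff₀ hβ, mul_comm] at h
  have hc : lmin ∈ Ioo 0 1 := ry2Minimizer_mem_Ioo hu
  have hF : ∀ l, HasDerivAt F
      ((l - lmin) * (4 * (1 + u - u * (l + lmin)) / (β * (l ^ 2 + (1 - l) ^ 2)))) l :=
    hasDerivAt_ry2Objective hβ.ne' rfl (ry2Minimizer_critical hu)
  have hfactor : ∀ l ∈ Icc (0 : ℝ) 1,
      0 ≤ 4 * (1 + u - u * (l + lmin)) / (β * (l ^ 2 + (1 - l) ^ 2)) := fun l hl =>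
    div_nonneg (by linarith [one_add_sub_mul_add_pos hu hl (Ioo_subset_Icc_self hc)])
      (mul_pos hβ (sq_add_one_sub_sq_pos l)).le
  refine ⟨hc, fun μ hμ => isMinOn_Icc_of_deriv (hF 0).continuousAt (hF lmin).continuousAt
    (hF 1).continuousAt (fun l _ => (hF l).differentiableAt.differentiableWithinAt)
    (fun l _ => (hF l).differentiableAt.differentiableWithinAt) ?_ ?_ hμ⟩
  · intro l hl
    rw [(hF l).deriv]
    exact mul_nonpos_of_nonpos_of_nonneg (by linarith [hl.2])
      (hfactor l ⟨hl.1.le, hl.2.trans hc.2 |>.le⟩)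
  · intro l hl
    rw [(hF l).deriv]
    exact mul_nonneg (by linarith [hl.1]) (hfactor l ⟨hc.1.trans hl.1 |>.le, hl.2.le⟩)
end

section
/- For S = Ry2 and β > 0, the successor function Υ(x, β) = min_{λ ∈ [0,1]}(λx + β⁻¹ log(λ² + (1-λ)²)) is strictly increasing on the interval (-2/β, 2/β); in particular it is injective there. -/
/-!
For fixed `l ∈ [0, 1]`, `x ↦ l * x + β⁻¹ * log (l ^ 2 + (1 - l) ^ 2)` is affine with slope
`l ≥ 0`, so `succRy2 β` is monotone; it is strictly increasing at `y` as soon as some minimiser at `y` has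
`l > 0`. The objective vanishes at `l = 0`, and for `y < 2 / β` it is negative for small `l > 0`
because `log (1 - 2l + 2l²) ≤ 2l² - 2l`, so every minimiser has `l > 0`.
-/

noncomputable def succRy2 (β x : ℝ) : ℝ :=
  sInf ((fun l => l * x + β⁻¹ * Real.log (l^2 + (1-l)^2)) '' Set.Icc (0:ℝ) 1)

open Set Real

noncomputable def ry2Objective (β x l : ℝ) : ℝ := l * x + β⁻¹ * log (l ^ 2 + (1 - l) ^ 2)

lemma ry2Objective_zero (β x : ℝ) : ry2Objective β x 0 = 0 := by
  simp [ry2Objective]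

lemma ry2Objective_continuous (β x : ℝ) : Continuous (ry2Objective β x) := by
  have hpos : ∀ l : ℝ, l ^ 2 + (1 - l) ^ 2 ≠ 0 := fun l => by
    nlinarith [sq_nonneg (2 * l - 1)]
  unfold ry2Objective
  fun_prop (disch := exact hpos _)

lemma exists_isMinOn_ry2Objective (β x : ℝ) :
    ∃ l ∈ Icc (0 : ℝ) 1, IsMinOn (ry2Objective β x) (Icc 0 1) l :=
  isCompact_Icc.exists_isMinOn (nonempty_Icc.2 zero_le_one)
    (ry2Objective_continuous β x).continuousOn

lemma succRy2_le_ry2Objective (β x : ℝ) {l : ℝ} (hl : l ∈ Icc (0 : ℝ) 1) :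
    succRy2 β x ≤ ry2Objective β x l :=
  csInf_le (isCompact_Icc.bddBelow_image (ry2Objective_continuous β x).continuousOn)
    (mem_image_of_mem _ hl)

lemma succRy2_eq_of_isMinOn {β x l : ℝ} (hl : l ∈ Icc (0 : ℝ) 1)
    (hmin : IsMinOn (ry2Objective β x) (Icc 0 1) l) :
    succRy2 β x = ry2Objective β x l :=
  IsLeast.csInf_eq ⟨mem_image_of_mem _ hl, forall_mem_image.2 fun _ h => isMinOn_iff.1 hmin _ h⟩

lemma ry2Objective_le {β : ℝ} (hβ : 0 < β) (x l : ℝ) :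
    ry2Objective β x l ≤ l * (β * x - 2 + 2 * l) / β := by
  have hlog : log (l ^ 2 + (1 - l) ^ 2) ≤ 2 * l ^ 2 - 2 * l := by
    have := log_le_sub_one_of_pos (show 0 < l ^ 2 + (1 - l) ^ 2 by
      nlinarith [sq_nonneg (2 * l - 1)])
    linarith
  calc ry2Objective β x l ≤ l * x + β⁻¹ * (2 * l ^ 2 - 2 * l) := by
        unfold ry2Objective; gcongr
    _ = l * (β * x - 2 + 2 * l) / β := by field_simp; ring

lemma exists_ry2Objective_neg {β x : ℝ} (hβ : 0 < β) (hx : x < 2 / β) :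
    ∃ l ∈ Icc (0 : ℝ) 1, ry2Objective β x l < 0 := by
  have ht : 0 < 1 - β * x / 2 := by
    rw [lt_div_iff₀ hβ] at hx; linarith
  obtain ⟨l, hl, hlt⟩ := exists_between (lt_min one_pos ht)
  rw [lt_min_iff] at hlt
  refine ⟨l, ⟨hl.le, hlt.1.le⟩, (ry2Objective_le hβ x l).trans_lt ?_⟩
  exact div_neg_of_neg_of_pos (mul_neg_of_pos_of_neg hl (by linarith)) hβ

lemma pos_of_isMinOn_ry2Objective {β x l : ℝ} (hβ : 0 < β) (hx : x < 2 / β)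
    (hl : l ∈ Icc (0 : ℝ) 1) (hmin : IsMinOn (ry2Objective β x) (Icc 0 1) l) : 0 < l := by
  refine hl.1.lt_of_ne fun h => ?_
  obtain ⟨l', hl', hneg⟩ := exists_ry2Objective_neg hβ hx
  have := hmin hl'
  rw [← h, ry2Objective_zero] at this
  exact (this.trans_lt hneg).false

lemma succRy2_strictMonoOn_Iio {β : ℝ} (hβ : 0 < β) :
    StrictMonoOn (succRy2 β) (Iio (2 / β)) := by
  intro x _ y hy hxy
  obtain ⟨l, hl, hmin⟩ := exists_isMinOn_ry2Objective β y
  have hlpos : 0 < l := pos_of_isMinOn_ry2Objective hβ hy hl hmin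
  calc succRy2 β x ≤ ry2Objective β x l := succRy2_le_ry2Objective β x hl
    _ < ry2Objective β y l := by unfold ry2Objective; gcongr
    _ = succRy2 β y := (succRy2_eq_of_isMinOn hl hmin).symm

theorem succRy2_strictMono (β : ℝ) (hβ : 0 < β) :
    StrictMonoOn (succRy2 β) (Set.Ioo (-(2/β)) (2/β)) :=
  (succRy2_strictMonoOn_Iio hβ).mono Ioo_subset_Iio_self
end

section
/- For the Shannon entropy S(λ) = -λ log λ - (1-λ) log(1-λ) and β > 0, the thermodynamic addition x ⊕ y = min_{λ∈[0,1]}(λx + (1-λ)y - β⁻¹S(λ)) has the closed form x ⊕ y = -β⁻¹ log(e^{-βx} + e^{-βy}), and in particular is associative. -/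
noncomputable def shannon (l : ℝ) : ℝ := -l * Real.log l - (1 - l) * Real.log (1 - l)

noncomputable def taddSh (β x y : ℝ) : ℝ :=
  sInf ((fun l => l * x + (1 - l) * y - β⁻¹ * shannon l) '' Set.Icc (0:ℝ) 1)

/-!
Gibbs' variational principle: for real `a, b` and `l ∈ [0, 1]`,
`l a + (1 - l) b + S(l) ≤ log (eᵃ + eᵇ)`, by `log u ≤ u - 1` applied to each of the two terms
with `u = q / l`, where `q` is the Gibbs weight `eᵃ / (eᵃ + eᵇ)` resp. `eᵇ / (eᵃ + eᵇ)`;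
equality holds at `l = eᵃ / (eᵃ + eᵇ)`. Scaling by `-β⁻¹` gives the closed form, which says that
`x ↦ exp (-β x)` turns `⊕` into `+`, so `⊕` is associative.
-/

open Real Set

lemma mul_log_add_negMulLog_le {q l : ℝ} (hq : 0 < q) (hl : 0 ≤ l) :
    l * log q + negMulLog l ≤ q - l := by
  rcases hl.eq_or_lt with rfl | hl
  · simpa using hq.le
  have hlog : log q - log l ≤ q / l - 1 := by
    simpa [log_div hq.ne' hl.ne'] using log_le_sub_one_of_pos (div_pos hq hl)
  calc l * log q + negMulLog l = l * (log q - log l) := by rw [negMulLog]; ring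
    _ ≤ l * (q / l - 1) := mul_le_mul_of_nonneg_left hlog hl.le
    _ = q - l := by field_simp

lemma shannon_eq_negMulLog_add (l : ℝ) : shannon l = negMulLog l + negMulLog (1 - l) := by
  simp only [shannon, negMulLog]; ring

lemma isGreatest_mul_add_mul_add_shannon (a b : ℝ) :
    IsGreatest ((fun l => l * a + (1 - l) * b + shannon l) '' Icc 0 1) (log (exp a + exp b)) := by
  set Z := exp a + exp b
  have hZ : 0 < Z := by positivity
  have hlogA : log (exp a / Z) = a - log Z := by rw [log_div (exp_pos a).ne' hZ.ne', log_exp]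
  have hlogB : log (exp b / Z) = b - log Z := by rw [log_div (exp_pos b).ne' hZ.ne', log_exp]
  have hsum : exp a / Z + exp b / Z = 1 := by rw [← add_div, div_self hZ.ne']
  constructor
  · refine ⟨exp a / Z, ⟨by positivity, ?_⟩, ?_⟩
    · linarith [div_pos (exp_pos b) hZ]
    · simp only [shannon, show 1 - exp a / Z = exp b / Z by linarith, hlogA, hlogB]
      linear_combination log Z * hsum
  · rintro _ ⟨l, ⟨hl0, hl1⟩, rfl⟩
    have hA := mul_log_add_negMulLog_le (div_pos (exp_pos a) hZ) hl0
    have hB := mul_log_add_negMulLog_le (div_pos (exp_pos b) hZ) (sub_nonneg.2 hl1)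
    rw [hlogA] at hA
    rw [hlogB] at hB
    dsimp only
    rw [shannon_eq_negMulLog_add]
    linarith

lemma isLeast_taddSh_objective {β : ℝ} (hβ : 0 < β) (x y : ℝ) :
    IsLeast ((fun l => l * x + (1 - l) * y - β⁻¹ * shannon l) '' Icc 0 1)
      (-β⁻¹ * log (exp (-β * x) + exp (-β * y))) := by
  have hscale : (fun l => l * x + (1 - l) * y - β⁻¹ * shannon l) =
      (fun t => -β⁻¹ * t) ∘ (fun l => l * (-β * x) + (1 - l) * (-β * y) + shannon l) := by
    ext l
    simp only [Function.comp_apply]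
    field_simp
    ring
  have hanti : Antitone fun t : ℝ => -β⁻¹ * t := fun _ _ h =>
    mul_le_mul_of_nonpos_left h (by simp [hβ.le])
  rw [hscale, image_comp]
  exact (hanti.antitoneOn _).map_isGreatest (isGreatest_mul_add_mul_add_shannon _ _)

theorem taddSh_eq {β : ℝ} (hβ : 0 < β) (x y : ℝ) :
    taddSh β x y = -β⁻¹ * log (exp (-β * x) + exp (-β * y)) :=
  (isLeast_taddSh_objective hβ x y).csInf_eq

lemma exp_neg_mul_taddSh {β : ℝ} (hβ : 0 < β) (x y : ℝ) :
    exp (-β * taddSh β x y) = exp (-β * x) + exp (-β * y) := by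
  rw [taddSh_eq hβ, ← mul_assoc, neg_mul_neg, mul_inv_cancel₀ hβ.ne', one_mul,
    exp_log (by positivity)]

theorem taddSh_closed_form_and_assoc (β : ℝ) (hβ : 0 < β) :
    (∀ x y : ℝ, taddSh β x y = -β⁻¹ * Real.log (Real.exp (-β * x) + Real.exp (-β * y))) ∧
    (∀ x y z : ℝ, taddSh β (taddSh β x y) z = taddSh β x (taddSh β y z)) := by
  refine ⟨taddSh_eq hβ, fun x y z => ?_⟩
  rw [taddSh_eq hβ (taddSh β x y), taddSh_eq hβ x (taddSh β y z),
    exp_neg_mul_taddSh hβ, exp_neg_mul_taddSh hβ, add_assoc]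
end

section
/- For S = Ry2 and β > 0, the thermodynamic addition ⊕ on ℝ is not associative: there exist x, y, z ∈ ℝ with (x ⊕ y) ⊕ z ≠ x ⊕ (y ⊕ z). -/
noncomputable def taddRy2 (β x y : ℝ) : ℝ :=
  sInf ((fun l => l * x + (1 - l) * y + β⁻¹ * Real.log (l^2 + (1-l)^2)) '' Set.Icc (0:ℝ) 1)

/-!
Since `log (l² + (1-l)²)` has derivative `-2` at `l = 0` and lies above `-2l` on `[0, 1]`,
`x ⊕ y = y` exactly when `x - y ≥ 2/β`, and `x ⊕ y < y` otherwise. With `z = -2/β` this gives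
`0 ⊕ (0 ⊕ z) = z`, whereas `0 ⊕ 0 < 0` forces `(0 ⊕ 0) ⊕ z < z`.
-/

open Real Set

lemma neg_two_mul_le_log_sq_add_one_sub_sq {l : ℝ} (hl : 0 ≤ l) :
    -(2 * l) ≤ log (l ^ 2 + (1 - l) ^ 2) := by
  rw [le_log_iff_exp_le (sq_add_one_sub_sq_pos l), exp_neg, inv_le_iff_one_le_mul₀ (exp_pos _)]
  have hexp : 1 + 2 * l + 2 * l ^ 2 ≤ exp (2 * l) := by
    nlinarith [quadratic_le_exp_of_nonneg (x := 2 * l) (by linarith)]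
  -- `(1 - 2l + 2l²)(1 + 2l + 2l²) = 1 + 4l⁴`
  calc (1 : ℝ) ≤ (l ^ 2 + (1 - l) ^ 2) * (1 + 2 * l + 2 * l ^ 2) := by nlinarith [sq_nonneg (l ^ 2)]
    _ ≤ (l ^ 2 + (1 - l) ^ 2) * exp (2 * l) := by gcongr

lemma log_sq_add_one_sub_sq_le (l : ℝ) : log (l ^ 2 + (1 - l) ^ 2) ≤ -(2 * l) + 2 * l ^ 2 := by
  linarith [log_le_sub_one_of_pos (sq_add_one_sub_sq_pos l)]

section taddRy2

variable {β x y a : ℝ}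

lemma taddRy2_le {l : ℝ} (hl : l ∈ Icc (0 : ℝ) 1) :
    taddRy2 β x y ≤ l * x + (1 - l) * y + β⁻¹ * log (l ^ 2 + (1 - l) ^ 2) := by
  refine csInf_le (isCompact_Icc.bddBelow_image ?_) (mem_image_of_mem _ hl)
  have := fun l : ℝ => (sq_add_one_sub_sq_pos l).ne'
  fun_prop (disch := assumption)

lemma le_taddRy2
    (h : ∀ l ∈ Icc (0 : ℝ) 1, a ≤ l * x + (1 - l) * y + β⁻¹ * log (l ^ 2 + (1 - l) ^ 2)) :
    a ≤ taddRy2 β x y :=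
  le_csInf ((nonempty_Icc.mpr zero_le_one).image _) (forall_mem_image.mpr h)

lemma taddRy2_eq_right (hβ : 0 < β) (h : 2 * β⁻¹ ≤ x - y) : taddRy2 β x y = y := by
  refine le_antisymm (by simpa using taddRy2_le (x := x) (y := y) (β := β) (l := 0) (by simp))
    (le_taddRy2 fun l ⟨hl0, _⟩ => ?_)
  have hlog : β⁻¹ * -(2 * l) ≤ β⁻¹ * log (l ^ 2 + (1 - l) ^ 2) := by
    gcongr; exact neg_two_mul_le_log_sq_add_one_sub_sq hl0
  linarith [mul_le_mul_of_nonneg_left h hl0]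

lemma taddRy2_lt_right (hβ : 0 < β) (h : x - y < 2 * β⁻¹) : taddRy2 β x y < y := by
  set d := 2 * β⁻¹ - (x - y)
  have hd : 0 < d := by linarith
  set l := min 1 (β * d / 4)
  have hl0 : 0 < l := lt_min one_pos (by positivity)
  have hl1 : l ≤ 1 := min_le_left _ _
  have hsmall : 2 * β⁻¹ * l ≤ d / 2 := by
    calc 2 * β⁻¹ * l ≤ 2 * β⁻¹ * (β * d / 4) := by gcongr; exact min_le_right _ _
      _ = d / 2 := by field_simp; ring
  have hlog : β⁻¹ * log (l ^ 2 + (1 - l) ^ 2) ≤ β⁻¹ * (-(2 * l) + 2 * l ^ 2) := by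
    gcongr; exact log_sq_add_one_sub_sq_le l
  have hgain : l * (2 * β⁻¹ * l - d) < 0 := mul_neg_of_pos_of_neg hl0 (by linarith)
  linarith [taddRy2_le (β := β) (x := x) (y := y) ⟨hl0.le, hl1⟩]

end taddRy2

theorem taddRy2_not_assoc (β : ℝ) (hβ : 0 < β) :
    ∃ x y z : ℝ, taddRy2 β (taddRy2 β x y) z ≠ taddRy2 β x (taddRy2 β y z) := by
  have hβ' : 0 < β⁻¹ := inv_pos.mpr hβ
  have hzero : taddRy2 β 0 0 < 0 := taddRy2_lt_right hβ (by simpa using hβ')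
  have hright : taddRy2 β 0 (-(2 * β⁻¹)) = -(2 * β⁻¹) := taddRy2_eq_right hβ (by simp)
  refine ⟨0, 0, -(2 * β⁻¹), ne_of_lt ?_⟩
  rw [hright, hright]
  exact taddRy2_lt_right hβ (by linarith)
end
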